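/- For a function f : ℕ → ℕ, the following are equivalent: (i) f is a morphism N → N in HAsm, i.e. f is tracked: there exists r ∈ ℕ such that for all m ∈ !ℕ, r · m is defined and r · m ∈ !ℕ, and for all n ∈ ℕ and m ∈ ν(n), r · m ∈ ν(f n); (ii) there exists a computable function g : ℕ → List ℕ such that f n is an entry of g n for all n; (iii) there exists a computable function h : ℕ → ℕ such that f n ≤ h n for all n. -/

import Mathlib

/-!
A tracker `r` sends the realizer `⟨n⟩` of `n` to a list containing `f n`, so running `r` on
`⟨n⟩` gives (ii). Every entry of a list is below the list's code, which turns (ii) into (iii),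
and also means that any realizer `m` of `n` satisfies `n < m`. Hence, for a monotone
computable `H ≥ h`, the map `m ↦ ⟨0, 1, …, H m⟩` tracks every `f ≤ h`, giving (i).
-/

open CategoryTheory Encodable Denumerable

namespace Herbrand

/-- Kleene application in Kleene's first pca `K₁`: `e · n`. -/
def kap (e n : ℕ) : Part ℕ := Nat.Partrec.Code.eval (ofNat Nat.Partrec.Code e) n

/-- `kapIn r n S` : `r · n` is defined and its value lies in `S`. -/
def kapIn (r n : ℕ) (S : Set ℕ) : Prop := ∃ v ∈ kap r n, v ∈ S

/-- The list coded by a natural number (canonical bijection `ℕ ≃ List ℕ`). -/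
def toL (n : ℕ) : List ℕ := ofNat (List ℕ) n

/-- The code of a list of natural numbers. -/
def ofL (l : List ℕ) : ℕ := encode l

@[simp] lemma toL_ofL (l : List ℕ) : toL (ofL l) = l := ofNat_encode l

/-- `!A` : the set of codes of lists all of whose entries lie in `A`. -/
def bang (A : Set ℕ) : Set ℕ := {n | ∀ x ∈ toL n, x ∈ A}

/-- `m ⪯ n` : every entry of the list coded by `m` is an entry of the list coded by `n`. -/
def sle (m n : ℕ) : Prop := ∀ x ∈ toL m, x ∈ toL n

lemma sle_refl (m : ℕ) : sle m m := fun _ hx => hx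

lemma sle_trans {m n k : ℕ} (h1 : sle m n) (h2 : sle n k) : sle m k :=
  fun x hx => h2 x (h1 x hx)

/-- `S` is upward closed in `!A`. -/
def UpwardClosedIn (A S : Set ℕ) : Prop :=
  ∀ m ∈ S, ∀ n ∈ bang A, sle m n → n ∈ S

/-- `↑_{!A} S` : the set of `n ∈ !A` with `m ⪯ n` for some `m ∈ S`. -/
def upClo (A S : Set ℕ) : Set ℕ := {n | n ∈ bang A ∧ ∃ m ∈ S, sle m n}

lemma mem_bang_univ (n : ℕ) : n ∈ bang Set.univ := fun x _ => Set.mem_univ x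

/-- From a partial recursive function we get a `K₁`-code for it. -/
theorem exists_kap_eq {f : ℕ →. ℕ} (hf : Nat.Partrec f) : ∃ e, ∀ n, kap e n = f n := by
  obtain ⟨c, hc⟩ := Nat.Partrec.Code.exists_code.mp hf
  exact ⟨encode c, fun n => by simp [kap, hc]⟩


/-- A Herbrand assembly over `K₁`. -/
structure HAsmObj where
  carrier : Type
  real : Set ℕ
  rz : carrier → Set ℕ
  rz_sub : ∀ a, rz a ⊆ bang real
  rz_ne : ∀ a, (rz a).Nonempty
  rz_up : ∀ a, UpwardClosedIn real (rz a)

/-- `r ∈ ℕ` tracks the function `f` between the underlying sets of two Herbrand assemblies. -/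
def Tracks (B A : HAsmObj) (f : B.carrier → A.carrier) (r : ℕ) : Prop :=
  (∀ m ∈ bang B.real, kapIn r m (bang A.real)) ∧
  ∀ b : B.carrier, ∀ m ∈ B.rz b, kapIn r m (A.rz (f b))

/-- A morphism of Herbrand assemblies: a tracked function. -/
structure HHom (B A : HAsmObj) where
  toFun : B.carrier → A.carrier
  tracked : ∃ r, Tracks B A toFun r

theorem HHom.ext' {B A : HAsmObj} {f g : HHom B A} (h : f.toFun = g.toFun) : f = g := by
  cases f; cases g; simpa using h

theorem tracks_id_fun (B A : HAsmObj) (f : B.carrier → A.carrier)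
    (h1 : ∀ m ∈ bang B.real, m ∈ bang A.real)
    (h2 : ∀ b : B.carrier, ∀ m ∈ B.rz b, m ∈ A.rz (f b)) : ∃ r, Tracks B A f r := by
  obtain ⟨e, he⟩ := exists_kap_eq (Nat.Partrec.of_primrec Nat.Primrec.id)
  exact ⟨e, fun m hm => ⟨m, by simp [he], h1 m hm⟩,
    fun b m hm => ⟨m, by simp [he], h2 b m hm⟩⟩

theorem tracked_id (A : HAsmObj) : ∃ r, Tracks A A id r :=
  tracks_id_fun A A id (fun _ h => h) (fun _ _ h => h)

theorem tracked_comp {C B A : HAsmObj} {f : C.carrier → B.carrier} {g : B.carrier → A.carrier}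
    (hf : ∃ r, Tracks C B f r) (hg : ∃ s, Tracks B A g s) : ∃ t, Tracks C A (g ∘ f) t := by
  obtain ⟨r, hr1, hr2⟩ := hf
  obtain ⟨s, hs1, hs2⟩ := hg
  refine ⟨encode (Nat.Partrec.Code.comp (ofNat Nat.Partrec.Code s) (ofNat Nat.Partrec.Code r)),
    ?_, ?_⟩
  · intro m hm
    obtain ⟨v, hv, hv'⟩ := hr1 m hm
    obtain ⟨w, hw, hw'⟩ := hs1 v hv'
    exact ⟨w, by simp only [kap, ofNat_encode, Nat.Partrec.Code.eval]; exact Part.mem_bind_iff.mpr ⟨v, hv, hw⟩, hw'⟩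
  · intro c m hm
    obtain ⟨v, hv, hv'⟩ := hr2 c m hm
    obtain ⟨w, hw, hw'⟩ := hs2 (f c) v hv'
    exact ⟨w, by simp only [kap, ofNat_encode, Nat.Partrec.Code.eval]; exact Part.mem_bind_iff.mpr ⟨v, hv, hw⟩, hw'⟩

/-- The category `HAsm` of Herbrand assemblies over `K₁`. -/
instance : Category HAsmObj where
  Hom B A := HHom B A
  id A := ⟨id, tracked_id A⟩
  comp f g := ⟨g.toFun ∘ f.toFun, tracked_comp f.tracked g.tracked⟩
  id_comp f := HHom.ext' rfl
  comp_id f := HHom.ext' rfl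
  assoc f g h := HHom.ext' rfl


/-- The Herbrand assembly `∇X = (X, ℕ, x ↦ !ℕ)`. -/
def nablaObj (X : Type) : HAsmObj where
  carrier := X
  real := Set.univ
  rz _ := bang Set.univ
  rz_sub _ := fun _ h => h
  rz_ne _ := ⟨0, mem_bang_univ 0⟩
  rz_up _ := fun _ _ n hn _ => hn

/-- The functor `∇ : Set → HAsm`. -/
def Nabla : Type ⥤ HAsmObj where
  obj := nablaObj
  map f := ⟨f, tracks_id_fun _ _ f (fun _ h => h) (fun _ _ h => h)⟩
  map_id _ := HHom.ext' rfl
  map_comp _ _ := HHom.ext' rfl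

/-- The underlying-set functor `Γ : HAsm → Set`. -/
def Gamma : HAsmObj ⥤ Type where
  obj A := A.carrier
  map f := TypeCat.ofHom f.toFun

/-- The realizability structure of the natural numbers object: `ν n = ↑_{!ℕ} {⟨n⟩}`. -/
def nuN (n : ℕ) : Set ℕ := upClo Set.univ {ofL [n]}

/-- The natural numbers object `N = (ℕ, ℕ, ν)` of `HAsm`. -/
def NObj : HAsmObj where
  carrier := ℕ
  real := Set.univ
  rz := nuN
  rz_sub _ := fun _ hm => hm.1
  rz_ne n := ⟨ofL [n], mem_bang_univ _, ofL [n], rfl, sle_refl _⟩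
  rz_up _ := fun m hm k hk hmk => ⟨hk, hm.2.choose, hm.2.choose_spec.1,
    sle_trans hm.2.choose_spec.2 hmk⟩

/-- The terminal object `1 = ({*}, ℕ, * ↦ !ℕ)` of `HAsm`. -/
def oneObj : HAsmObj := nablaObj PUnit

/-- The zero morphism `0 : 1 ⟶ N`. -/
def zeroH : oneObj ⟶ NObj := by
  refine ⟨fun _ => (0 : ℕ), ?_⟩
  obtain ⟨e, he⟩ := exists_kap_eq (Nat.Partrec.of_primrec (Nat.Primrec.const (ofL [0])))
  exact ⟨e, fun m _ => ⟨ofL [0], by simp [he], mem_bang_univ _⟩,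
    fun b m _ => ⟨ofL [0], by simp [he], mem_bang_univ _, ofL [0], rfl, sle_refl _⟩⟩

/-- The successor morphism `s : N ⟶ N`. -/
def succH : NObj ⟶ NObj := by
  refine ⟨(Nat.succ : ℕ → ℕ), ?_⟩
  have hp : Primrec (fun m : ℕ => ofL ((toL m).map Nat.succ)) :=
    Primrec.encode.comp ((Primrec.ofNat (List ℕ)).list_map
      ((Primrec.succ.comp Primrec.snd).to₂))
  obtain ⟨e, he⟩ := exists_kap_eq (Nat.Partrec.of_primrec (Primrec.nat_iff.mp hp))
  refine ⟨e, fun m _ => ⟨ofL ((toL m).map Nat.succ), by simp [he], mem_bang_univ _⟩, ?_⟩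
  rintro (n : ℕ) m hm
  refine ⟨ofL ((toL m).map Nat.succ), by simp [he], mem_bang_univ _, ofL [n + 1], rfl, ?_⟩
  intro x hx
  have hn : n ∈ toL m := hm.2.choose_spec.2 n (by
    have : hm.2.choose = ofL [n] := hm.2.choose_spec.1
    rw [this]; simp)
  have hx' : x = n + 1 := by simpa using hx
  subst hx'
  simp only [toL_ofL, List.mem_map]
  exact ⟨n, hn, rfl⟩

theorem _root_.List.encode_lt_encode_of_mem {α : Type*} [Encodable α] {l : List α} {a : α}
    (h : a ∈ l) : encode a < encode l := by
  induction l with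
  | nil => cases h
  | cons b l ih =>
    rw [encode_list_cons, Nat.lt_succ_iff]
    rcases List.mem_cons.mp h with rfl | h
    · exact Nat.left_le_pair _ _
    · exact (ih h).le.trans (Nat.right_le_pair _ _)

theorem lt_of_mem_toL {n m : ℕ} (h : n ∈ toL m) : n < m := by
  simpa [toL] using List.encode_lt_encode_of_mem h

theorem _root_.Computable.exists_monotone_ge {h : ℕ → ℕ} (hh : Computable h) :
    ∃ H : ℕ → ℕ, Computable H ∧ Monotone H ∧ h ≤ H := by
  let H : ℕ → ℕ := fun n =>
    Nat.rec (motive := fun _ => ℕ) (h 0) (fun k acc => max acc (h (k + 1))) n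
  refine ⟨H, ?_, monotone_nat_of_le_succ fun n => le_max_left _ _, ?_⟩
  · exact Computable.nat_rec Computable.id (hh.comp (Computable.const 0))
      (Primrec.nat_max.to_comp.comp (Computable.snd.comp Computable.snd)
        (hh.comp (Computable.succ.comp (Computable.fst.comp Computable.snd)))).to₂
  · rintro (_ | n)
    · exact le_rfl
    · exact le_max_right _ _

theorem mem_nuN_iff {n m : ℕ} : m ∈ nuN n ↔ n ∈ toL m := by
  simp [nuN, upClo, sle, mem_bang_univ]

theorem kap_partrec (r : ℕ) : Nat.Partrec (kap r) :=
  Nat.Partrec.Code.exists_code.mpr ⟨ofNat Nat.Partrec.Code r, rfl⟩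

theorem exists_computable_mem_of_tracks {f : ℕ → ℕ} {r : ℕ} (hr : Tracks NObj NObj f r) :
    ∃ g : ℕ → List ℕ, Computable g ∧ ∀ n, f n ∈ g n := by
  have hsingleton : Computable fun n : ℕ => ofL [n] :=
    Computable.encode.comp (Computable.list_cons.comp Computable.id (Computable.const []))
  have hrun : ∀ n, ∃ v ∈ kap r (ofL [n]), f n ∈ toL v := fun n => by
    simpa [kapIn, NObj, mem_nuN_iff] using hr.2 n (ofL [n]) (mem_nuN_iff.mpr (by simp))
  choose v hv hfv using hrun
  have hv_comp : Computable v :=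
    ((Partrec.nat_iff.mpr (kap_partrec r)).comp hsingleton).of_eq_tot hv
  exact ⟨fun n => toL (v n), (Computable.ofNat (List ℕ)).comp hv_comp, hfv⟩

theorem exists_tracks_of_computable {f F : ℕ → ℕ} (hF : Computable F)
    (hf : ∀ n m, n ∈ toL m → f n ∈ toL (F m)) : ∃ r, Tracks NObj NObj f r := by
  obtain ⟨r, hr⟩ := exists_kap_eq (Partrec.nat_iff.mp hF.partrec)
  refine ⟨r, fun m _ => ⟨F m, by simp [hr], mem_bang_univ _⟩, fun n m hm => ?_⟩
  exact ⟨F m, by simp [hr], mem_nuN_iff.mpr (hf n m (mem_nuN_iff.mp hm))⟩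

theorem exists_tracks_of_le_computable {f h : ℕ → ℕ} (hh : Computable h)
    (hfh : ∀ n, f n ≤ h n) : ∃ r, Tracks NObj NObj f r := by
  obtain ⟨H, hH, hH_mono, hhH⟩ := hh.exists_monotone_ge
  refine exists_tracks_of_computable (F := fun m => ofL (List.range (H m + 1)))
    (Computable.encode.comp (Primrec.list_range.to_comp.comp (Computable.succ.comp hH)))
    fun n m hn => ?_
  rw [toL_ofL, List.mem_range, Nat.lt_succ_iff]
  exact (hfh n).trans ((hhH n).trans (hH_mono (lt_of_mem_toL hn).le))

/-- a function `f : ℕ → ℕ` is a morphism `N ⟶ N` of Herbrand assemblies iff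
it is entry-wise covered by a computable list-valued function iff it is bounded by a
computable function. -/
theorem tracked_iff_bounded (f : ℕ → ℕ) :
    ((∃ r : ℕ, Tracks NObj NObj f r) ↔
      ∃ g : ℕ → List ℕ, Computable g ∧ ∀ n, f n ∈ g n) ∧
    ((∃ r : ℕ, Tracks NObj NObj f r) ↔
      ∃ h : ℕ → ℕ, Computable h ∧ ∀ n, f n ≤ h n) := by
  have tracked_to_list : (∃ r, Tracks NObj NObj f r) →
      ∃ g : ℕ → List ℕ, Computable g ∧ ∀ n, f n ∈ g n :=
    fun ⟨_, hr⟩ => exists_computable_mem_of_tracks hr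
  have list_to_bound : (∃ g : ℕ → List ℕ, Computable g ∧ ∀ n, f n ∈ g n) →
      ∃ h : ℕ → ℕ, Computable h ∧ ∀ n, f n ≤ h n :=
    fun ⟨g, hg, hfg⟩ => ⟨fun n => encode (g n), Computable.encode.comp hg,
      fun n => (List.encode_lt_encode_of_mem (hfg n)).le⟩
  have bound_to_tracked : (∃ h : ℕ → ℕ, Computable h ∧ ∀ n, f n ≤ h n) →
      ∃ r, Tracks NObj NObj f r :=
    fun ⟨_, hh, hfh⟩ => exists_tracks_of_le_computable hh hfh
  exact ⟨⟨tracked_to_list, bound_to_tracked ∘ list_to_bound⟩,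
    ⟨list_to_bound ∘ tracked_to_list, bound_to_tracked⟩⟩

end Herbrand
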